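/- For every real x with 0 \le x < 1, \sum_{k=0}^\infty binom(3k,k) (4x/27)^k = (1/sqrt(1-x)) * cos(arcsin(sqrt(x))/3). -/

import Mathlib

open Real

namespace SC3K

noncomputable def c (k : ℕ) : ℝ := (Nat.choose (3*k) k : ℝ) * (4/27)^k

lemma choose_rec (k : ℕ) :
    2*(k+1)*(2*k+1) * Nat.choose (3*k+3) (k+1) = 3*(3*k+1)*(3*k+2) * Nat.choose (3*k) k := by
  have h1 := Nat.choose_mul_factorial_mul_factorial (show k ≤ 3*k by omega)
  have h2 := Nat.choose_mul_factorial_mul_factorial (show k+1 ≤ 3*k+3 by omega)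
  have e1 : 3*k - k = 2*k := by omega
  have e2 : 3*k+3 - (k+1) = 2*k+2 := by omega
  rw [e1] at h1; rw [e2] at h2
  have f1 : Nat.factorial (3*k+3) = (3*k+3)*(3*k+2)*(3*k+1) * Nat.factorial (3*k) := by
    rw [show 3*k+3 = (3*k+2)+1 from rfl, Nat.factorial_succ,
        show 3*k+2 = (3*k+1)+1 from rfl, Nat.factorial_succ,
        show 3*k+1 = (3*k)+1 from rfl, Nat.factorial_succ]
    ring
  have f2 : Nat.factorial (k+1) = (k+1) * Nat.factorial k := Nat.factorial_succ k
  have f3 : Nat.factorial (2*k+2) = (2*k+2)*(2*k+1) * Nat.factorial (2*k) := by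
    rw [show 2*k+2 = (2*k+1)+1 from rfl, Nat.factorial_succ,
        show 2*k+1 = (2*k)+1 from rfl, Nat.factorial_succ]
    ring
  have hpos : 0 < (k+1) * (Nat.factorial k * Nat.factorial (2*k)) := by positivity
  apply Nat.eq_of_mul_eq_mul_right hpos
  calc 2*(k+1)*(2*k+1) * Nat.choose (3*k+3) (k+1) * ((k+1) * (Nat.factorial k * Nat.factorial (2*k)))
      = Nat.choose (3*k+3) (k+1) * Nat.factorial (k+1) * Nat.factorial (2*k+2) := by
        rw [f2, f3]; ring
    _ = Nat.factorial (3*k+3) := h2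
    _ = (3*k+3)*(3*k+2)*(3*k+1) * Nat.factorial (3*k) := f1
    _ = (3*k+3)*(3*k+2)*(3*k+1) * (Nat.choose (3*k) k * Nat.factorial k * Nat.factorial (2*k)) := by
        rw [h1]
    _ = 3*(3*k+1)*(3*k+2) * Nat.choose (3*k) k * ((k+1) * (Nat.factorial k * Nat.factorial (2*k))) := by
        ring

lemma c_rec (k : ℕ) :
    ((k:ℝ)+1)*((k:ℝ)+1/2) * c (k+1) = ((k:ℝ)^2 + k + 2/9) * c k := by
  have h := choose_rec k
  have h' : 2*((k:ℝ)+1)*(2*(k:ℝ)+1) * (Nat.choose (3*k+3) (k+1) : ℝ)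
      = 3*(3*(k:ℝ)+1)*(3*(k:ℝ)+2) * (Nat.choose (3*k) k : ℝ) := by exact_mod_cast h
  unfold c
  rw [show 3*(k+1) = 3*k+3 by ring]
  linear_combination ((4/27:ℝ)^k / 27) * h'

lemma c_nonneg (k : ℕ) : 0 ≤ c k := by unfold c; positivity

lemma c_le_one (k : ℕ) : c k ≤ 1 := by
  induction k with
  | zero => simp [c]
  | succ n ih =>
    have h := c_rec n
    nlinarith [c_nonneg n, c_nonneg (n+1), Nat.cast_nonneg (α := ℝ) n]

noncomputable def g (x : ℝ) : ℝ := ∑' k : ℕ, c k * x^k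
noncomputable def g1 (x : ℝ) : ℝ := ∑' k : ℕ, ((k:ℝ)+1) * c (k+1) * x^k
noncomputable def g2 (x : ℝ) : ℝ := ∑' k : ℕ, ((k:ℝ)+2) * ((k:ℝ)+1) * c (k+2) * x^k

lemma summable_poly_geo {b : ℝ} (hb0 : 0 < b) (hb : b < 1) (j : ℕ) :
    Summable (fun n : ℕ => ((n:ℝ)+1)^j * b^n) := by
  have h := summable_pow_mul_geometric_of_norm_lt_one (R := ℝ) j
    (r := b) (by rw [Real.norm_eq_abs, abs_of_pos hb0]; exact hb)
  have h2 : Summable (fun n : ℕ => ((n:ℝ)+1)^j * b^(n+1)) := by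
    have h3 := h.comp_injective Nat.succ_injective
    refine h3.congr fun n => ?_
    simp [Function.comp]
  have h3 := h2.mul_left (1/b)
  refine h3.congr fun n => ?_
  field_simp
  ring

lemma summable_term {x : ℝ} (hx : |x| < 1) (q : ℕ → ℝ) (C : ℝ) (j : ℕ)
    (hq : ∀ n, |q n| ≤ C * ((n:ℝ)+1)^j) :
    Summable fun n : ℕ => q n * x^n := by
  set b := (1+|x|)/2 with hbdef
  have hxb : |x| ≤ b := by rw [hbdef]; linarith [abs_nonneg x]
  have hb0 : 0 < b := by rw [hbdef]; linarith [abs_nonneg x]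
  have hb1 : b < 1 := by rw [hbdef]; linarith
  refine Summable.of_norm_bounded (g := fun n => C * (((n:ℝ)+1)^j * b^n))
    (((summable_poly_geo hb0 hb1 j)).mul_left C) fun n => ?_
  rw [Real.norm_eq_abs, abs_mul, abs_pow]
  have h1 : |x|^n ≤ b^n := pow_le_pow_left₀ (abs_nonneg x) hxb n
  have h2 : (0:ℝ) ≤ ((n:ℝ)+1)^j := by positivity
  have h3 : (0:ℝ) ≤ C := le_trans (abs_nonneg _) (by simpa using hq 0)
  calc |q n| * |x|^n ≤ (C * ((n:ℝ)+1)^j) * b^n := by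
        apply mul_le_mul (hq n) h1 (by positivity) (by positivity)
    _ = C * (((n:ℝ)+1)^j * b^n) := by ring

lemma hasDerivAt_tsum_pow (a : ℕ → ℝ) (C : ℝ) (j : ℕ)
    (ha : ∀ n, |a n| ≤ C * ((n:ℝ)+1)^j) {x : ℝ} (hx : |x| < 1) :
    HasDerivAt (fun z : ℝ => ∑' n : ℕ, a n * z^n) (∑' n : ℕ, ((n:ℝ)+1) * a (n+1) * x^n) x := by
  set b := (1+|x|)/2 with hbdef
  have hxb : |x| < b := by rw [hbdef]; linarith
  have hb0 : 0 < b := by rw [hbdef]; linarith [abs_nonneg x]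
  have hb1 : b < 1 := by rw [hbdef]; linarith
  have hC : 0 ≤ C := le_trans (abs_nonneg _) (by simpa using ha 0)
  set u : ℕ → ℝ := fun n => (C/b) * (((n:ℝ)+1)^(j+1) * b^n) with hudef
  have hu : Summable u := (summable_poly_geo hb0 hb1 (j+1)).mul_left _
  have hbound : ∀ (n : ℕ) (y : ℝ), y ∈ Metric.ball (0:ℝ) b →
      ‖a n * ((n:ℝ) * y^(n-1))‖ ≤ u n := by
    intro n y hy
    have hyb : |y| ≤ b := by
      rw [mem_ball_zero_iff, Real.norm_eq_abs] at hy; exact hy.le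
    rw [Real.norm_eq_abs, abs_mul, abs_mul, abs_pow, Nat.abs_cast]
    match n with
    | 0 => simp [hudef]; positivity
    | Nat.succ m =>
      have h1 : |y|^(m+1-1) ≤ b^m := by
        simpa using pow_le_pow_left₀ (abs_nonneg y) hyb m
      have h2 : |a (m+1)| ≤ C * ((m:ℝ)+2)^j := by
        have h := ha (m+1); push_cast at h
        rw [show ((m:ℝ)+2) = (m:ℝ)+1+1 by ring]; exact h
      have h4 : (0:ℝ) ≤ ((m:ℝ)+1) := by positivity
      calc |a (m+1)| * (((m+1:ℕ):ℝ) * |y|^(m+1-1))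
          ≤ (C * ((m:ℝ)+2)^j) * (((m:ℝ)+1) * b^m) := by
            push_cast
            apply mul_le_mul h2 (by apply mul_le_mul_of_nonneg_left h1 (by positivity))
              (by positivity) (by positivity)
        _ ≤ (C * ((m:ℝ)+2)^j) * (((m:ℝ)+2) * b^m) := by
            have : ((m:ℝ)+1) * b^m ≤ ((m:ℝ)+2) * b^m := by nlinarith [pow_pos hb0 m]
            exact mul_le_mul_of_nonneg_left this (by positivity)
        _ = (C/b) * ((((m+1:ℕ):ℝ)+1)^(j+1) * b^(m+1)) := by
            push_cast
            rw [show ((m:ℝ)+1+1) = (m:ℝ)+2 by ring, pow_succ (((m:ℝ)+2)) j, pow_succ b m]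
            field_simp
        _ = u (m+1) := rfl
  have hder : ∀ (n : ℕ) (y : ℝ), y ∈ Metric.ball (0:ℝ) b →
      HasDerivAt (fun z : ℝ => a n * z^n) (a n * ((n:ℝ) * y^(n-1))) y :=
    fun n y _ => (hasDerivAt_pow n y).const_mul (a n)
  have h0mem : (0:ℝ) ∈ Metric.ball (0:ℝ) b := by simpa using hb0
  have hxmem : x ∈ Metric.ball (0:ℝ) b := by
    rw [mem_ball_zero_iff, Real.norm_eq_abs]; exact hxb
  have hsum0 : Summable fun n => a n * (0:ℝ)^n :=
    summable_term (by simpa using one_pos) a C j ha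
  have key := hasDerivAt_tsum_of_isPreconnected hu Metric.isOpen_ball
    (convex_ball (0:ℝ) b).isPreconnected hder hbound h0mem hsum0 hxmem
  have hsx : Summable fun n => a n * ((n:ℝ) * x^(n-1)) :=
    Summable.of_norm_bounded hu fun n => hbound n x hxmem
  have hre : (∑' n : ℕ, a n * ((n:ℝ) * x^(n-1))) = ∑' n : ℕ, ((n:ℝ)+1) * a (n+1) * x^n := by
    rw [Summable.tsum_eq_zero_add hsx]
    simp only [Nat.cast_zero, zero_mul, mul_zero, zero_add]
    refine tsum_congr fun n => ?_
    have : (n+1) - 1 = n := rfl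
    rw [this]
    push_cast
    ring
  rw [← hre]
  exact key

lemma c_abs (n : ℕ) : |c n| ≤ (1:ℝ) * ((n:ℝ)+1)^0 := by
  rw [abs_of_nonneg (c_nonneg n), pow_zero, one_mul]; exact c_le_one n

lemma g1coef_abs (n : ℕ) : |((n:ℝ)+1) * c (n+1)| ≤ (1:ℝ) * ((n:ℝ)+1)^1 := by
  rw [abs_mul, abs_of_nonneg (c_nonneg (n+1)), abs_of_nonneg (by positivity : (0:ℝ) ≤ (n:ℝ)+1),
    one_mul, pow_one]
  nlinarith [c_le_one (n+1), c_nonneg (n+1), Nat.cast_nonneg (α := ℝ) n]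

lemma hasDerivAt_g {x : ℝ} (hx : |x| < 1) : HasDerivAt g (g1 x) x :=
  hasDerivAt_tsum_pow c 1 0 c_abs hx

lemma hasDerivAt_g1 {x : ℝ} (hx : |x| < 1) : HasDerivAt g1 (g2 x) x := by
  have key := hasDerivAt_tsum_pow (fun n => ((n:ℝ)+1) * c (n+1)) 1 1 g1coef_abs hx
  have h1 : (fun z : ℝ => ∑' n : ℕ, (((n:ℝ)+1) * c (n+1)) * z^n) = g1 := by
    funext z; unfold g1; exact tsum_congr fun n => by ring
  have h2 : (∑' n : ℕ, ((n:ℝ)+1) * ((((n+1:ℕ):ℝ)+1) * c ((n+1)+1)) * x^n) = g2 x := by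
    unfold g2; exact tsum_congr fun n => by push_cast; ring
  rw [h1, h2] at key
  exact key

lemma summable_g {x : ℝ} (hx : |x| < 1) : Summable fun n : ℕ => c n * x^n :=
  summable_term hx c 1 0 c_abs

lemma g_ode {x : ℝ} (hx : |x| < 1) :
    x*(1-x)*g2 x + (1/2 - 2*x)*g1 x - (2/9)*g x = 0 := by
  have sS1 : Summable fun n : ℕ => (n:ℝ) * c n * x^n := by
    refine summable_term hx _ 1 1 fun n => ?_
    rw [abs_mul, abs_of_nonneg (c_nonneg n), Nat.abs_cast, one_mul, pow_one]
    nlinarith [c_le_one n, c_nonneg n, Nat.cast_nonneg (α := ℝ) n]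
  have sS2 : Summable fun n : ℕ => (n:ℝ) * ((n:ℝ)-1) * c n * x^n := by
    refine summable_term hx _ 1 2 fun n => ?_
    rw [abs_mul, abs_mul, abs_of_nonneg (c_nonneg n), Nat.abs_cast, one_mul]
    have h1 : |(n:ℝ)-1| ≤ (n:ℝ)+1 := by
      rw [abs_le]; constructor <;> nlinarith [Nat.cast_nonneg (α := ℝ) n]
    calc (n:ℝ) * |(n:ℝ)-1| * c n ≤ ((n:ℝ)*((n:ℝ)+1)) * 1 := by
          apply mul_le_mul (mul_le_mul_of_nonneg_left h1 (Nat.cast_nonneg n)) (c_le_one n)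
            (c_nonneg n) (by positivity)
      _ ≤ ((n:ℝ)+1)^2 := by nlinarith [Nat.cast_nonneg (α := ℝ) n]
  have sD1 : Summable fun n : ℕ => ((n:ℝ)+1) * (n:ℝ) * c (n+1) * x^n := by
    refine summable_term hx _ 1 2 fun n => ?_
    rw [abs_mul, abs_mul, abs_of_nonneg (c_nonneg (n+1)), Nat.abs_cast,
      abs_of_nonneg (by positivity : (0:ℝ) ≤ (n:ℝ)+1), one_mul]
    nlinarith [c_le_one (n+1), c_nonneg (n+1), Nat.cast_nonneg (α := ℝ) n]
  have sg1 : Summable fun n : ℕ => ((n:ℝ)+1) * c (n+1) * x^n :=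
    summable_term hx _ 1 1 g1coef_abs
  have sg : Summable fun n : ℕ => c n * x^n := summable_g hx
  -- h1 : x * g1 x = tsum S1
  have h1 : x * g1 x = ∑' n : ℕ, (n:ℝ) * c n * x^n := by
    rw [Summable.tsum_eq_zero_add sS1]
    simp only [Nat.cast_zero, zero_mul, zero_add]
    have : (∑' n : ℕ, ((n+1:ℕ):ℝ) * c (n+1) * x^(n+1))
        = ∑' n : ℕ, (((n:ℝ)+1) * c (n+1) * x^n) * x := tsum_congr fun n => by push_cast; ring
    rw [this, tsum_mul_right]
    unfold g1; ring
  have h2 : x * g2 x = ∑' n : ℕ, ((n:ℝ)+1) * (n:ℝ) * c (n+1) * x^n := by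
    rw [Summable.tsum_eq_zero_add sD1]
    simp only [Nat.cast_zero, zero_mul, mul_zero, zero_add]
    have : (∑' n : ℕ, (((n+1:ℕ):ℝ)+1) * ((n+1:ℕ):ℝ) * c ((n+1)+1) * x^(n+1))
        = ∑' n : ℕ, (((n:ℝ)+2) * ((n:ℝ)+1) * c (n+2) * x^n) * x := tsum_congr fun n => by push_cast; ring
    rw [this, tsum_mul_right]
    unfold g2; ring
  have h3 : x * (∑' n : ℕ, ((n:ℝ)+1) * (n:ℝ) * c (n+1) * x^n)
      = ∑' n : ℕ, (n:ℝ) * ((n:ℝ)-1) * c n * x^n := by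
    rw [Summable.tsum_eq_zero_add sS2]
    simp only [Nat.cast_zero, zero_mul, zero_add]
    have : (∑' n : ℕ, ((n+1:ℕ):ℝ) * (((n+1:ℕ):ℝ)-1) * c (n+1) * x^(n+1))
        = ∑' n : ℕ, (((n:ℝ)+1) * (n:ℝ) * c (n+1) * x^n) * x := tsum_congr fun n => by push_cast; ring
    rw [this, tsum_mul_right]
    ring
  have h4 : (∑' n : ℕ, ((n:ℝ)+1) * (n:ℝ) * c (n+1) * x^n) + (1/2) * g1 x
      = (∑' n : ℕ, (n:ℝ) * ((n:ℝ)-1) * c n * x^n)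
        + 2 * (∑' n : ℕ, (n:ℝ) * c n * x^n) + (2/9) * g x := by
    unfold g1 g
    rw [← tsum_mul_left (a := (1/2:ℝ)), ← Summable.tsum_add sD1 (sg1.mul_left _),
        ← tsum_mul_left (a := (2:ℝ)), ← tsum_mul_left (a := (2/9:ℝ)),
        ← Summable.tsum_add sS2 (sS1.mul_left _), ← Summable.tsum_add (sS2.add (sS1.mul_left _)) (sg.mul_left _)]
    refine tsum_congr fun n => ?_
    have hr := c_rec n
    linear_combination (x^n) * hr
  linear_combination (1-x) * h2 - h3 + h4 - 2*h1

noncomputable def uu (s : ℝ) : ℝ := Real.cos (Real.arcsin s / 3)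
noncomputable def uu1 (s : ℝ) : ℝ := -Real.sin (Real.arcsin s / 3) / (3 * Real.sqrt (1-s^2))
noncomputable def GG (s : ℝ) : ℝ := Real.sqrt (1-s^2) * g (s^2)
noncomputable def GG1 (s : ℝ) : ℝ :=
  (-s * g (s^2)) / Real.sqrt (1-s^2) + Real.sqrt (1-s^2) * (2*s*g1 (s^2))
noncomputable def WW (s : ℝ) : ℝ := uu s * GG1 s - uu1 s * GG s

section

variable {s : ℝ}

lemma one_sub_sq_pos (hs : -1 < s) (hs' : s < 1) : 0 < 1 - s^2 := by nlinarith

lemma sqrt_one_sub_sq_pos (hs : -1 < s) (hs' : s < 1) : 0 < Real.sqrt (1-s^2) := Real.sqrt_pos.mpr (one_sub_sq_pos hs hs')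

lemma sq_abs_lt (hs : -1 < s) (hs' : s < 1) : |s^2| < 1 := by rw [abs_of_nonneg (sq_nonneg s)]; nlinarith

lemma hasDerivAt_sq (s : ℝ) : HasDerivAt (fun t : ℝ => t^2) (2*s) s := by
  simpa using hasDerivAt_pow 2 s

lemma hasDerivAt_sqrt_one_sub_sq (hs : -1 < s) (hs' : s < 1) :
    HasDerivAt (fun t : ℝ => Real.sqrt (1-t^2)) (-s / Real.sqrt (1-s^2)) s := by
  have h1 : HasDerivAt (fun t : ℝ => 1-t^2) (-(2*s)) s :=
    HasDerivAt.const_sub 1 (hasDerivAt_sq s)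
  have h2 := (Real.hasDerivAt_sqrt (ne_of_gt (one_sub_sq_pos hs hs'))).comp s h1
  have h3 : (fun t : ℝ => Real.sqrt (1-t^2)) = (fun y => Real.sqrt y) ∘ (fun t : ℝ => 1-t^2) := rfl
  rw [h3]
  refine h2.congr_deriv ?_
  symm
  have hw := sqrt_one_sub_sq_pos hs hs'
  rw [div_eq_iff hw.ne']
  field_simp

lemma hasDerivAt_gsq (hs : -1 < s) (hs' : s < 1) :
    HasDerivAt (fun t : ℝ => g (t^2)) (g1 (s^2) * (2*s)) s := by
  have hgg : HasDerivAt g (g1 (s^2)) ((fun t : ℝ => t^2) s) := hasDerivAt_g (sq_abs_lt hs hs')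
  have h := HasDerivAt.comp (h := fun t : ℝ => t^2) (h₂ := g) s hgg (hasDerivAt_sq s)
  simpa [Function.comp_def] using h

lemma hasDerivAt_g1sq (hs : -1 < s) (hs' : s < 1) :
    HasDerivAt (fun t : ℝ => g1 (t^2)) (g2 (s^2) * (2*s)) s := by
  have hgg : HasDerivAt g1 (g2 (s^2)) ((fun t : ℝ => t^2) s) := hasDerivAt_g1 (sq_abs_lt hs hs')
  have h := HasDerivAt.comp (h := fun t : ℝ => t^2) (h₂ := g1) s hgg (hasDerivAt_sq s)
  simpa [Function.comp_def] using h

lemma hasDerivAt_uu (hs : -1 < s) (hs' : s < 1) : HasDerivAt uu (uu1 s) s := by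
  have harc : HasDerivAt (fun t : ℝ => Real.arcsin t / 3) (1 / Real.sqrt (1-s^2) / 3) s :=
    (Real.hasDerivAt_arcsin (by linarith) (by linarith)).div_const 3
  have h := (Real.hasDerivAt_cos (Real.arcsin s / 3)).comp s harc
  refine h.congr_deriv ?_
  symm
  unfold uu1
  have hw := sqrt_one_sub_sq_pos hs hs'
  rw [div_eq_iff (by positivity : (3:ℝ) * Real.sqrt (1-s^2) ≠ 0)]
  field_simp

lemma hasDerivAt_GG (hs : -1 < s) (hs' : s < 1) : HasDerivAt GG (GG1 s) s := by
  have h := (hasDerivAt_sqrt_one_sub_sq hs hs').mul (hasDerivAt_gsq hs hs')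
  refine h.congr_deriv ?_
  symm
  unfold GG1
  have hw := sqrt_one_sub_sq_pos hs hs'
  rw [div_add' _ _ _ hw.ne', div_eq_iff hw.ne']
  ring_nf
  rw [mul_inv_cancel_right₀ hw.ne']

lemma hasDerivAt_uu1 (hs : -1 < s) (hs' : s < 1) :
    HasDerivAt uu1 ((s * uu1 s - uu s / 9) / (1-s^2)) s := by
  have hnum : HasDerivAt (fun t : ℝ => -Real.sin (Real.arcsin t / 3))
      (-(Real.cos (Real.arcsin s / 3) * (1 / Real.sqrt (1-s^2) / 3))) s := by
    have harc : HasDerivAt (fun t : ℝ => Real.arcsin t / 3) (1 / Real.sqrt (1-s^2) / 3) s :=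
      (Real.hasDerivAt_arcsin (by linarith) (by linarith)).div_const 3
    exact ((Real.hasDerivAt_sin (Real.arcsin s / 3)).comp s harc).neg
  have hden : HasDerivAt (fun t : ℝ => 3 * Real.sqrt (1-t^2))
      (3 * (-s / Real.sqrt (1-s^2))) s := (hasDerivAt_sqrt_one_sub_sq hs hs').const_mul 3
  have hw := sqrt_one_sub_sq_pos hs hs'
  have h := hnum.div hden (by positivity)
  refine h.congr_deriv ?_
  symm
  unfold uu uu1
  rw [show (1:ℝ)-s^2 = (Real.sqrt (1-s^2))^2 from (Real.sq_sqrt (one_sub_sq_pos hs hs').le).symm]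
  field_simp
  rw [Real.sqrt_sq hw.le]
  ring

lemma hasDerivAt_GG1 (hs : -1 < s) (hs' : s < 1) :
    HasDerivAt GG1 ((s * GG1 s - GG s / 9) / (1-s^2)) s := by
  have hw := sqrt_one_sub_sq_pos hs hs'
  have hw2 : (Real.sqrt (1-s^2))^2 = 1-s^2 := Real.sq_sqrt (one_sub_sq_pos hs hs').le
  have hnum : HasDerivAt (fun t : ℝ => -t * g (t^2))
      (-1 * g (s^2) + (-s) * (g1 (s^2) * (2*s))) s :=
    ((hasDerivAt_id s).neg).mul (hasDerivAt_gsq hs hs')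
  have hA : HasDerivAt (fun t : ℝ => (-t * g (t^2)) / Real.sqrt (1-t^2))
      (((-1 * g (s^2) + (-s) * (g1 (s^2) * (2*s))) * Real.sqrt (1-s^2)
        - (-s * g (s^2)) * (-s / Real.sqrt (1-s^2))) / (Real.sqrt (1-s^2))^2) s :=
    hnum.div (hasDerivAt_sqrt_one_sub_sq hs hs') (ne_of_gt hw)
  have hBin : HasDerivAt (fun t : ℝ => 2*t*g1 (t^2))
      (2 * g1 (s^2) + 2*s * (g2 (s^2) * (2*s))) s := by
    have h1 : HasDerivAt (fun t : ℝ => 2*t) 2 s := by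
      simpa using (hasDerivAt_id s).const_mul 2
    have := h1.mul (hasDerivAt_g1sq hs hs')
    exact this.congr_deriv (by ring)
  have hB : HasDerivAt (fun t : ℝ => Real.sqrt (1-t^2) * (2*t*g1 (t^2)))
      ((-s / Real.sqrt (1-s^2)) * (2*s*g1 (s^2))
        + Real.sqrt (1-s^2) * (2 * g1 (s^2) + 2*s * (g2 (s^2) * (2*s)))) s :=
    (hasDerivAt_sqrt_one_sub_sq hs hs').mul hBin
  have hraw := hA.add hB
  have hE : HasDerivAt GG1
      ((-((Real.sqrt (1-s^2))^2 + s^2) * g (s^2)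
        + (2*(Real.sqrt (1-s^2))^4 - 4*s^2*(Real.sqrt (1-s^2))^2) * g1 (s^2)
        + 4*s^2*(Real.sqrt (1-s^2))^4 * g2 (s^2)) / (Real.sqrt (1-s^2))^3) s := by
    refine hraw.congr_deriv ?_
    symm
    field_simp
    ring
  refine hE.congr_deriv ?_
  symm
  have hode : s^2*(1-s^2)*g2 (s^2) + (1/2 - 2*s^2)*g1 (s^2) - (2/9)*g (s^2) = 0 :=
    g_ode (sq_abs_lt hs hs')
  rw [div_eq_div_iff (one_sub_sq_pos hs hs').ne' (by positivity)]
  have hexp : (s * GG1 s - GG s / 9) * (Real.sqrt (1-s^2))^3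
      = -s^2 * g (s^2) * (Real.sqrt (1-s^2))^2 + 2*s^2*(Real.sqrt (1-s^2))^4 * g1 (s^2)
        - (Real.sqrt (1-s^2))^4 * g (s^2) / 9 := by
    unfold GG1 GG
    field_simp
  rw [hexp]
  linear_combination (-(4*s^2*(Real.sqrt (1-s^2))^2 * g1 (s^2))
      - ((Real.sqrt (1-s^2))^2 + s^2) * g (s^2)) * hw2 - 4*(Real.sqrt (1-s^2))^4 * hode

lemma hasDerivAt_WW (hs : -1 < s) (hs' : s < 1) : HasDerivAt WW ((s * WW s) / (1-s^2)) s := by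
  have h := ((hasDerivAt_uu hs hs').mul (hasDerivAt_GG1 hs hs')).sub
    ((hasDerivAt_uu1 hs hs').mul (hasDerivAt_GG hs hs'))
  refine h.congr_deriv ?_
  symm
  unfold WW
  have h0 : (1:ℝ) - s^2 ≠ 0 := (one_sub_sq_pos hs hs').ne'
  field_simp
  ring

lemma hasDerivAt_Phi (hs : -1 < s) (hs' : s < 1) : HasDerivAt (fun t => WW t * Real.sqrt (1-t^2)) 0 s := by
  have h := (hasDerivAt_WW hs hs').mul (hasDerivAt_sqrt_one_sub_sq hs hs')
  refine h.congr_deriv ?_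
  symm
  have hw := sqrt_one_sub_sq_pos hs hs'
  have hw2 : (Real.sqrt (1-s^2))^2 = 1-s^2 := Real.sq_sqrt (one_sub_sq_pos hs hs').le
  rw [show (1:ℝ)-s^2 = (Real.sqrt (1-s^2))^2 from hw2.symm]
  field_simp
  rw [Real.sqrt_sq hw.le]
  ring

end

lemma WW_zero {s : ℝ} (h0 : 0 ≤ s) (h1 : s < 1) : WW s = 0 := by
  have key : ∀ q ∈ Set.Icc (0:ℝ) s, WW q * Real.sqrt (1-q^2) = WW 0 * Real.sqrt (1-0^2) := by
    apply constant_of_has_deriv_right_zero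
    · intro q hq
      exact (hasDerivAt_Phi (by linarith [hq.1]) (by linarith [hq.2])).continuousAt.continuousWithinAt
    · intro q hq
      exact (hasDerivAt_Phi (by linarith [hq.1]) (by linarith [hq.2])).hasDerivWithinAt
  have h2 := key s (Set.mem_Icc.mpr ⟨h0, le_refl s⟩)
  have hW0 : WW 0 = 0 := by
    unfold WW uu1 GG1
    simp [Real.arcsin_zero]
  rw [hW0, zero_mul] at h2
  have hw : 0 < Real.sqrt (1-s^2) := Real.sqrt_pos.mpr (by nlinarith)
  rcases mul_eq_zero.mp h2 with h | h
  · exact h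
  · exact absurd h hw.ne'

lemma uu_pos {s : ℝ} (h0 : 0 ≤ s) (h1 : s < 1) : 0 < uu s := by
  unfold uu
  apply Real.cos_pos_of_mem_Ioo
  constructor
  · have := Real.arcsin_nonneg.mpr h0
    nlinarith [Real.pi_pos]
  · have := Real.arcsin_le_pi_div_two s
    nlinarith [Real.pi_pos]

lemma g_zero : g 0 = 1 := by
  unfold g
  rw [tsum_eq_single 0 (fun k hk => by simp [zero_pow hk])]
  simp [c]

lemma GG_eq_uu {s : ℝ} (h0 : 0 ≤ s) (h1 : s < 1) : GG s = uu s := by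
  have key : ∀ q ∈ Set.Icc (0:ℝ) s, GG q / uu q = GG 0 / uu 0 := by
    apply constant_of_has_deriv_right_zero
    · intro q hq
      have hd := (hasDerivAt_GG (by linarith [hq.1]) (by linarith [hq.2])).div
        (hasDerivAt_uu (by linarith [hq.1]) (by linarith [hq.2]))
        (uu_pos hq.1 (by linarith [hq.2])).ne'
      exact hd.continuousAt.continuousWithinAt
    · intro q hq
      have hd := (hasDerivAt_GG (by linarith [hq.1]) (by linarith [hq.2])).div
        (hasDerivAt_uu (by linarith [hq.1]) (by linarith [hq.2]))
        (uu_pos hq.1 (by linarith [hq.2])).ne'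
      have hW := WW_zero hq.1 (lt_trans hq.2 h1)
      unfold WW at hW
      have hzero : (GG1 q * uu q - GG q * uu1 q) / uu q ^ 2 = 0 := by
        rw [div_eq_zero_iff]; left; linarith [hW]
      rw [hzero] at hd
      exact hd.hasDerivWithinAt
  have h2 := key s (Set.mem_Icc.mpr ⟨h0, le_refl s⟩)
  have hG0 : GG 0 = 1 := by
    unfold GG; simp [g_zero]
  have hu0 : uu 0 = 1 := by
    unfold uu; simp [Real.arcsin_zero]
  rw [hG0, hu0] at h2
  have := uu_pos h0 h1
  field_simp at h2
  exact h2

end SC3K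

theorem sum_choose_3k_k (x : ℝ) (hx0 : 0 ≤ x) (hx1 : x < 1) :
    ∑' k : ℕ, (Nat.choose (3 * k) k : ℝ) * (4 * x / 27) ^ k =
      (1 / Real.sqrt (1 - x)) * Real.cos (Real.arcsin (Real.sqrt x) / 3) := by
  have hLHS : ∑' k : ℕ, (Nat.choose (3 * k) k : ℝ) * (4 * x / 27) ^ k = SC3K.g x := by
    unfold SC3K.g
    apply tsum_congr
    intro k
    rw [show 4*x/27 = (4/27)*x by ring, mul_pow]
    unfold SC3K.c
    ring
  have hs0 : 0 ≤ Real.sqrt x := Real.sqrt_nonneg x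
  have hs1 : Real.sqrt x < 1 := by
    have h := Real.sqrt_lt_sqrt hx0 hx1
    simpa using h
  have hsq : (Real.sqrt x)^2 = x := Real.sq_sqrt hx0
  have hGu := SC3K.GG_eq_uu hs0 hs1
  unfold SC3K.GG SC3K.uu at hGu
  rw [hsq] at hGu
  have hw : 0 < Real.sqrt (1-x) := Real.sqrt_pos.mpr (by linarith)
  rw [hLHS]
  field_simp
  linarith [hGu]
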